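/- arXiv:0807.2267 — 5 statements merged into one kernel-verified Lean document; each statement's English description precedes it below -/
import Mathlib

section
/- Let S be an ordered abelian semigroup and λ a nonzero rational number. Then the mixable shuffle algebra of weight λ on S with rational coefficients is isomorphic as a ℚ-algebra to the mixable shuffle algebra of weight 1 on S with rational coefficients, via the map sending a pure tensor a_1 ⊗ ... ⊗ a_n to λ^n (a_1 ⊗ ... ⊗ a_n). -/
variable {S : Type*} {k : Type*}

/-- The mixable shuffle product of weight `lam` on pure tensor words. -/
noncomputable def msh [Mul S] [CommRing k] (lam : k) : List S → List S → (List S →₀ k)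
  | [], b => Finsupp.single b 1
  | a :: as, [] => Finsupp.single (a :: as) 1
  | a :: as, b :: bs =>
      Finsupp.mapDomain (a :: ·) (msh lam as (b :: bs))
      + Finsupp.mapDomain (b :: ·) (msh lam (a :: as) bs)
      + lam • Finsupp.mapDomain ((a * b) :: ·) (msh lam as bs)
  termination_by a b => a.length + b.length
  decreasing_by all_goals simp only [List.length_cons]; omega

/-- Bilinear extension of the mixable shuffle product. -/
noncomputable def mmul [Mul S] [CommRing k] (lam : k) (x y : List S →₀ k) : List S →₀ k :=
  x.sum fun a ca => y.sum fun b cb => (ca * cb) • msh lam a b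

/-- Unit of the mixable shuffle algebra: the empty word. -/
noncomputable def mone [CommRing k] : List S →₀ k := Finsupp.single [] 1

/-- Powers with respect to the mixable shuffle product. -/
noncomputable def mpow [Mul S] [CommRing k] (lam : k) (x : List S →₀ k) : ℕ → (List S →₀ k)
  | 0 => mone
  | n + 1 => mmul lam x (mpow lam x n)

/-- The `(n+1)`-st power of an element of a semigroup. -/
def spow [Mul S] (a : S) : ℕ → S
  | 0 => a
  | n + 1 => a * spow a n

/-- The pro-length order: compare by length first, then lexicographically. -/
def prolen [LT S] (u v : List S) : Prop :=
  u.length < v.length ∨ (u.length = v.length ∧ List.Lex (· < ·) u v)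

/-- A Lyndon word: nonempty, lexicographically smaller than each proper right factor. -/
def IsLyndon [LT S] (w : List S) : Prop :=
  w ≠ [] ∧ ∀ u v : List S, w = u ++ v → u ≠ [] → v ≠ [] → List.Lex (· < ·) w v

/-- The rescaling map sending a pure tensor `a₁ ⊗ ⋯ ⊗ aₙ` to `lam^n (a₁ ⊗ ⋯ ⊗ aₙ)`. -/
noncomputable def rescale {S : Type*} (lam : ℚ) (x : List S →₀ ℚ) : List S →₀ ℚ :=
  x.sum fun w c => (lam ^ w.length * c) • Finsupp.single w (1 : ℚ)

lemma rescale_apply {S : Type*} (lam : ℚ) (x : List S →₀ ℚ) (w : List S) :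
    rescale lam x w = lam ^ w.length * x w := by
  classical
  rw [rescale, Finsupp.sum_apply]
  simp only [Finsupp.smul_apply, Finsupp.single_apply, smul_eq_mul]
  rw [Finsupp.sum]
  simp only [mul_ite, mul_one, mul_zero]
  rw [Finset.sum_ite_eq' x.support w (fun u => lam ^ u.length * x u)]
  split
  · rfl
  · rw [Finsupp.notMem_support_iff.mp ‹_›, mul_zero]

lemma rescale_add {S : Type*} (lam : ℚ) (x y : List S →₀ ℚ) :
    rescale lam (x + y) = rescale lam x + rescale lam y := by
  ext w; simp [rescale_apply, mul_add]

lemma rescale_smul {S : Type*} (lam c : ℚ) (x : List S →₀ ℚ) :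
    rescale lam (c • x) = c • rescale lam x := by
  ext w; simp [rescale_apply]; ring

lemma rescale_zero {S : Type*} (lam : ℚ) : rescale (S := S) lam 0 = 0 := by
  ext w; simp [rescale_apply]

lemma rescale_mapDomain_cons {S : Type*} (lam : ℚ) (a : S) (x : List S →₀ ℚ) :
    rescale lam (Finsupp.mapDomain (a :: ·) x)
      = lam • Finsupp.mapDomain (a :: ·) (rescale lam x) := by
  classical
  have hinj : Function.Injective (a :: · : List S → List S) := fun u v h => by
    simpa using h
  ext w
  match w with
  | [] =>
    rw [rescale_apply]
    have h1 : ([] : List S) ∉ Set.range (a :: · : List S → List S) := by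
      rintro ⟨u, hu⟩; simp at hu
    rw [Finsupp.mapDomain_notin_range _ _ h1]
    simp [Finsupp.mapDomain_notin_range _ _ h1]
  | b :: t =>
    by_cases hb : b = a
    · subst hb
      rw [rescale_apply, Finsupp.mapDomain_apply hinj, Finsupp.smul_apply,
        Finsupp.mapDomain_apply hinj, rescale_apply]
      simp only [List.length_cons, smul_eq_mul]
      ring
    · have h1 : (b :: t) ∉ Set.range (a :: · : List S → List S) := by
        rintro ⟨u, hu⟩; simp at hu; exact hb hu.1.symm
      rw [rescale_apply, Finsupp.mapDomain_notin_range _ _ h1, Finsupp.smul_apply,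
        Finsupp.mapDomain_notin_range _ _ h1]
      simp

lemma rescale_single {S : Type*} (lam : ℚ) (w : List S) (c : ℚ) :
    rescale lam (Finsupp.single w c) = (lam ^ w.length) • Finsupp.single w c := by
  classical
  ext u
  rw [rescale_apply, Finsupp.smul_apply, Finsupp.single_apply]
  by_cases h : w = u
  · subst h; simp
  · simp [h]

lemma rescale_msh {S : Type*} [CommSemigroup S] (lam : ℚ) :
    ∀ a b : List S, rescale lam (msh lam a b)
      = (lam ^ (a.length + b.length)) • msh (1 : ℚ) a b
  | [], b => by
    rw [msh, msh, rescale_single]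
    simp
  | a :: as, [] => by
    rw [msh, msh, rescale_single]
    simp
  | a :: as, b :: bs => by
    rw [msh, msh, rescale_add, rescale_add, rescale_smul,
      rescale_mapDomain_cons, rescale_mapDomain_cons, rescale_mapDomain_cons,
      rescale_msh lam as (b :: bs), rescale_msh lam (a :: as) bs, rescale_msh lam as bs,
      Finsupp.mapDomain_smul, Finsupp.mapDomain_smul, Finsupp.mapDomain_smul]
    simp only [List.length_cons, smul_add, smul_smul, one_smul]
    ring_nf
  termination_by a b => a.length + b.length
  decreasing_by all_goals simp only [List.length_cons]; omega

lemma mmul_zero_left [Mul S] [CommRing k] (lam : k) (y : List S →₀ k) :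
    mmul lam 0 y = 0 := by simp [mmul]

lemma mmul_zero_right [Mul S] [CommRing k] (lam : k) (x : List S →₀ k) :
    mmul lam x 0 = 0 := by simp [mmul]

lemma mmul_add_left [Mul S] [CommRing k] (lam : k) (x₁ x₂ y : List S →₀ k) :
    mmul lam (x₁ + x₂) y = mmul lam x₁ y + mmul lam x₂ y := by
  classical
  rw [mmul, Finsupp.sum_add_index] <;> simp [add_mul, add_smul, Finsupp.sum_add, mmul]

lemma mmul_add_right [Mul S] [CommRing k] (lam : k) (x y₁ y₂ : List S →₀ k) :
    mmul lam x (y₁ + y₂) = mmul lam x y₁ + mmul lam x y₂ := by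
  classical
  rw [mmul, mmul, mmul, ← Finsupp.sum_add]
  refine Finsupp.sum_congr fun a _ => ?_
  rw [Finsupp.sum_add_index] <;> simp [mul_add, add_smul]

lemma mmul_single_single [Mul S] [CommRing k] (lam : k) (u v : List S) (c d : k) :
    mmul lam (Finsupp.single u c) (Finsupp.single v d) = (c * d) • msh lam u v := by
  rw [mmul, Finsupp.sum_single_index, Finsupp.sum_single_index]
  · simp
  · simp

lemma rescale_mmul {S : Type*} [CommSemigroup S] (lam : ℚ) (x y : List S →₀ ℚ) :
    rescale lam (mmul lam x y) = mmul 1 (rescale lam x) (rescale lam y) := by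
  induction x using Finsupp.induction_linear with
  | zero => simp [mmul_zero_left, rescale_zero]
  | add f g hf hg => rw [mmul_add_left, rescale_add, hf, hg, rescale_add, mmul_add_left]
  | single u c =>
    induction y using Finsupp.induction_linear with
    | zero => simp [mmul_zero_right, rescale_zero]
    | add f g hf hg => rw [mmul_add_right, rescale_add, hf, hg, rescale_add, mmul_add_right]
    | single v d =>
      rw [mmul_single_single, rescale_smul, rescale_msh, rescale_single, rescale_single,
        Finsupp.smul_single, Finsupp.smul_single, mmul_single_single, smul_smul]
      congr 1
      simp only [smul_eq_mul]
      ring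


/-- For an ordered abelian semigroup `S` and `lam ≠ 0` in `ℚ`, the mixable shuffle algebra
of weight `lam` over `ℚ` on `S` is isomorphic as a `ℚ`-algebra to the mixable shuffle
algebra of weight `1` via `a₁ ⊗ ⋯ ⊗ aₙ ↦ lam^n (a₁ ⊗ ⋯ ⊗ aₙ)`. -/
theorem rescale_algEquiv {S : Type*} [CommSemigroup S] [LinearOrder S]
    (lam : ℚ) (hlam : lam ≠ 0) :
    Function.Bijective (rescale (S := S) lam)
    ∧ (∀ (c : ℚ) (x y : List S →₀ ℚ),
        rescale lam (c • x + y) = c • rescale lam x + rescale lam y)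
    ∧ rescale (S := S) lam mone = mone
    ∧ (∀ x y : List S →₀ ℚ,
        rescale lam (mmul lam x y) = mmul 1 (rescale lam x) (rescale lam y)) := by
  refine ⟨?_, ?_, ?_, fun x y => rescale_mmul lam x y⟩
  · rw [Function.bijective_iff_has_inverse]
    refine ⟨rescale lam⁻¹, fun x => ?_, fun x => ?_⟩ <;>
    · ext w
      rw [rescale_apply, rescale_apply, ← mul_assoc, ← mul_pow]
      first
      | rw [inv_mul_cancel₀ hlam, one_pow, one_mul]
      | rw [mul_inv_cancel₀ hlam, one_pow, one_mul]
  · intro c x y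
    rw [rescale_add, rescale_smul]
  · rw [mone, rescale_single]
    simp
end

section
/- Let S be an abelian semigroup in which every element g satisfies g^{p^2} = g^p, and let λ be a nonzero element of the field F_p. Then for any pure tensor word w in the mixable shuffle algebra of weight λ over F_p on S, the element (w - w^{(p)}) satisfies (w - w^{(p)})^{*p} = 0, where * is the mixable shuffle product and w^{(p)} takes the p-th power of each tensor factor of w. -/
variable {S : Type*} {k : Type*}

/-! ### Auxiliary development -/

section Aux

open MonoidAlgebra

variable [CommSemigroup S] [CommRing k]

/-- The elementary monomial: `a` in slot `N`, `1` elsewhere. -/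
def eN (N : ℕ) (a : S) : ℕ → WithOne S := fun i => if i = N then ↑a else 1

lemma eN_mul (N : ℕ) (a b : S) : eN N a * eN N b = eN N (a * b) := by
  funext i
  simp only [eN, Pi.mul_apply]
  split <;> simp

lemma eN_apply_self (N : ℕ) (a : S) : eN N a N = ↑a := by simp [eN]

lemma eN_apply_ne (N : ℕ) (a : S) {i : ℕ} (h : i ≠ N) : eN N a i = 1 := by simp [eN, h]

/-- Truncated "multiple sum" realization of words inside a monoid algebra. -/
noncomputable def psi (lam : k) : ℕ → List S → MonoidAlgebra k (ℕ → WithOne S)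
  | _, [] => 1
  | 0, _ :: _ => 0
  | N + 1, a :: t =>
      psi lam N (a :: t) + MonoidAlgebra.single (eN N a) lam * psi lam N t

lemma psi_nil (lam : k) (N : ℕ) : psi lam N ([] : List S) = 1 := by
  cases N <;> rfl

lemma psi_zero_cons (lam : k) (a : S) (t : List S) : psi lam 0 (a :: t) = 0 := rfl

lemma psi_succ_cons (lam : k) (N : ℕ) (a : S) (t : List S) :
    psi lam (N + 1) (a :: t)
      = psi lam N (a :: t) + MonoidAlgebra.single (eN N a) lam * psi lam N t := rfl

/-- `psi` vanishes on words longer than the truncation level. -/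
lemma psi_eq_zero_of_lt (lam : k) : ∀ (N : ℕ) (u : List S), N < u.length → psi lam N u = 0
  | 0, [], h => absurd h (by simp)
  | 0, a :: t, _ => rfl
  | N + 1, [], h => absurd h (by simp)
  | N + 1, a :: t, h => by
      rw [psi_succ_cons, psi_eq_zero_of_lt lam N (a :: t) (by omega),
        psi_eq_zero_of_lt lam N t (by simpa using Nat.lt_of_succ_lt_succ h)]
      simp

/-- Monomials occurring in `psi lam N u` are trivial in slots `≥ N`. -/
lemma psi_support (lam : k) :
    ∀ (N : ℕ) (u : List S), ∀ m ∈ (psi lam N u).coeff.support, ∀ i, N ≤ i → m i = 1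
  | N, [], m, hm, i, hi => by
      rw [psi_nil, MonoidAlgebra.one_def, MonoidAlgebra.coeff_single] at hm
      have := Finsupp.support_single_subset hm
      simp only [Finset.mem_singleton] at this
      subst this; rfl
  | 0, a :: t, m, hm, i, hi => by
      rw [psi_zero_cons] at hm; simp at hm
  | N + 1, a :: t, m, hm, i, hi => by
      classical
      rw [psi_succ_cons, MonoidAlgebra.coeff_add] at hm
      rcases Finset.mem_union.mp (Finsupp.support_add hm) with h | h
      · exact psi_support lam N (a :: t) m h i (by omega)
      · have h2 := MonoidAlgebra.support_coeff_mul_subset _ _ h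
        rcases Finset.mem_mul.mp h2 with ⟨y, hy, z, hz, hyz⟩
        have hy' : y = eN N a := by
          rw [MonoidAlgebra.coeff_single] at hy
          have := Finsupp.support_single_subset hy
          simpa using this
        have hz' : z i = 1 := psi_support lam N t z hz i (by omega)
        rw [← hyz]
        simp only [Pi.mul_apply, hy', hz', eN_apply_ne N a (by omega : i ≠ N), one_mul]

/-- The standard monomial of a word: letters placed in reversed order at slots `0,…,len-1`. -/
def gmon : List S → (ℕ → WithOne S)
  | [] => 1
  | a :: t => Function.update (gmon t) t.length ↑a

lemma gmon_apply_of_le : ∀ (w : List S) (i : ℕ), w.length ≤ i → gmon w i = 1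
  | [], i, _ => rfl
  | a :: t, i, hi => by
      have hne : i ≠ t.length := by simp at hi; omega
      rw [gmon, Function.update_of_ne hne]
      exact gmon_apply_of_le t i (by simp at hi; omega)

lemma gmon_cons_apply_len (a : S) (t : List S) : gmon (a :: t) t.length = ↑a := by
  rw [gmon, Function.update_self]

lemma gmon_ne_one {w : List S} (hw : w ≠ []) : gmon w ≠ (1 : ℕ → WithOne S) := by
  cases w with
  | nil => exact absurd rfl hw
  | cons a t =>
      intro h
      have := congrFun h t.length
      rw [gmon_cons_apply_len] at this
      exact WithOne.coe_ne_one this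

section Helpers

variable {M : Type*} [CommMonoid M]

lemma single_mul_apply_zero (g : M) (r : k) (f : MonoidAlgebra k M) (m : M)
    (h : ∀ m' ∈ f.coeff.support, g * m' ≠ m) :
    (MonoidAlgebra.single g r * f).coeff m = 0 := by
  classical
  rw [MonoidAlgebra.mul_apply, MonoidAlgebra.coeff_single, Finsupp.sum_single_index (by simp), Finsupp.sum]
  apply Finset.sum_eq_zero
  intro b hb
  rw [if_neg (h b hb)]

lemma single_mul_apply_eq (g : M) (r : k) (f : MonoidAlgebra k M) (m m₀ : M)
    (h : ∀ m' ∈ f.coeff.support, (g * m' = m ↔ m' = m₀)) :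
    (MonoidAlgebra.single g r * f).coeff m = r * f.coeff m₀ := by
  classical
  rw [MonoidAlgebra.mul_apply, MonoidAlgebra.coeff_single, Finsupp.sum_single_index (by simp), Finsupp.sum]
  by_cases hm : m₀ ∈ f.coeff.support
  · rw [Finset.sum_eq_single m₀]
    · rw [if_pos ((h m₀ hm).mpr rfl)]
    · intro b hb hne
      rw [if_neg (fun hc => hne ((h b hb).mp hc))]
    · intro h'; exact (h' hm).elim
  · rw [Finsupp.notMem_support_iff.mp hm, mul_zero]
    apply Finset.sum_eq_zero
    intro b hb
    rw [if_neg (fun hc => hm (((h b hb).mp hc) ▸ hb))]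

end Helpers

open scoped Classical in
/-- Coefficient extraction: `psi lam N u` evaluated at the standard monomial of `w`. -/
lemma psi_gmon (lam : k) :
    ∀ (N : ℕ) (u w : List S), u.length ≤ N → w.length ≤ N →
      (psi lam N u).coeff (gmon w) = if u = w then lam ^ w.length else 0 := by
  intro N
  induction N with
  | zero =>
      intro u w hu hw
      rw [List.length_eq_zero_iff.mp (Nat.le_zero.mp hu), List.length_eq_zero_iff.mp (Nat.le_zero.mp hw)]
      simp [psi_nil, gmon, MonoidAlgebra.one_def, Finsupp.single_apply]
  | succ N ih =>
      intro u w hu hw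
      classical
      cases u with
      | nil =>
          rw [psi_nil, MonoidAlgebra.one_def, MonoidAlgebra.coeff_single, Finsupp.single_apply]
          cases w with
          | nil => simp [gmon]
          | cons b w' =>
              rw [if_neg (fun h => gmon_ne_one (by simp) h.symm), if_neg (by simp)]
      | cons a u' =>
          rw [psi_succ_cons, MonoidAlgebra.coeff_add, Finsupp.add_apply]
          by_cases hw' : w.length ≤ N
          · have hterm2 : (MonoidAlgebra.single (eN N a) lam * psi lam N u').coeff (gmon w) = 0 := by
              apply single_mul_apply_zero
              intro m' hm' hc
              have h1 : (eN N a * m') N = ↑a := by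
                rw [Pi.mul_apply, eN_apply_self, psi_support lam N u' m' hm' N le_rfl, mul_one]
              rw [hc, gmon_apply_of_le w N hw'] at h1
              exact WithOne.coe_ne_one h1.symm
            rw [hterm2, add_zero]
            by_cases hu' : (a :: u').length ≤ N
            · exact ih (a :: u') w hu' hw'
            · have hlen : N < (a :: u').length := by omega
              rw [psi_eq_zero_of_lt lam N (a :: u') hlen]
              rw [if_neg (fun h => by rw [h] at hlen; omega)]
              rfl
          · have hwlen : w.length = N + 1 := by omega
            cases w with
            | nil => simp at hwlen
            | cons b w' =>
                have hw'len : w'.length = N := by simpa using hwlen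
                have hgw : gmon (b :: w') = Function.update (gmon w') N ↑b := by
                  rw [gmon, hw'len]
                have hgwN : gmon (b :: w') N = ↑b := by rw [hgw, Function.update_self]
                have hterm1 : (psi lam N (a :: u')).coeff (gmon (b :: w')) = 0 := by
                  apply Finsupp.notMem_support_iff.mp
                  intro hmem
                  have := psi_support lam N (a :: u') _ hmem N le_rfl
                  rw [hgwN] at this
                  exact WithOne.coe_ne_one this
                rw [hterm1, zero_add]
                by_cases hab : a = b
                · subst hab
                  have hiff : ∀ m' ∈ (psi lam N u').coeff.support,
                      (eN N a * m' = gmon (a :: w') ↔ m' = gmon w') := by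
                    intro m' hm'
                    constructor
                    · intro hc
                      funext i
                      rcases lt_trichotomy i N with hi | hi | hi
                      · have := congrFun hc i
                        rw [Pi.mul_apply, eN_apply_ne N a (by omega), one_mul, hgw,
                          Function.update_of_ne (by omega)] at this
                        exact this
                      · rw [hi, psi_support lam N u' m' hm' N le_rfl,
                          gmon_apply_of_le w' N (by omega)]
                      · rw [psi_support lam N u' m' hm' i (by omega),
                          gmon_apply_of_le w' i (by omega)]
                    · intro hc
                      subst hc
                      funext i
                      rcases eq_or_ne i N with hi | hi
                      · subst hi
                        rw [Pi.mul_apply, eN_apply_self,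
                          gmon_apply_of_le w' i (by omega), mul_one, hgwN]
                      · rw [Pi.mul_apply, eN_apply_ne N a hi, one_mul, hgw,
                          Function.update_of_ne hi]
                  rw [single_mul_apply_eq (h := hiff),
                    ih u' w' (by simp at hu; omega) (by omega)]
                  by_cases huw : u' = w'
                  · rw [if_pos huw, if_pos (by rw [huw]), List.length_cons, pow_succ,
                      mul_comm]
                  · rw [if_neg huw, if_neg (by simp [huw]), mul_zero]
                · have hterm2 : (MonoidAlgebra.single (eN N a) lam * psi lam N u').coeff
                      (gmon (b :: w')) = 0 := by
                    apply single_mul_apply_zero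
                    intro m' hm' hc
                    have h1 : (eN N a * m') N = ↑a := by
                      rw [Pi.mul_apply, eN_apply_self,
                        psi_support lam N u' m' hm' N le_rfl, mul_one]
                    rw [hc, hgwN] at h1
                    exact hab (WithOne.coe_inj.mp h1.symm)
                  rw [hterm2, if_neg (by simp [hab])]

/-- Linear extension of `psi` to the mixable shuffle algebra. -/
noncomputable def Phi (lam : k) (N : ℕ) :
    (List S →₀ k) →ₗ[k] MonoidAlgebra k (ℕ → WithOne S) :=
  Finsupp.linearCombination k (psi lam N)

lemma Phi_single (lam : k) (N : ℕ) (w : List S) (c : k) :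
    Phi lam N (Finsupp.single w c) = c • psi lam N w :=
  Finsupp.linearCombination_single k c w

/-- Words in the support of a double-cons quasi-shuffle are nonempty. -/
lemma msh_cons_cons_ne_nil (lam : k) (a b : S) (as bs : List S) :
    ∀ x ∈ (msh lam (a :: as) (b :: bs)).support, x ≠ [] := by
  classical
  intro x hx
  rw [msh] at hx
  rcases Finset.mem_union.mp (Finsupp.support_add hx) with h | h
  · rcases Finset.mem_union.mp (Finsupp.support_add h) with h1 | h1
    · rcases Finset.mem_image.mp (Finsupp.mapDomain_support h1) with ⟨y, _, hy⟩
      rw [← hy]; simp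
    · rcases Finset.mem_image.mp (Finsupp.mapDomain_support h1) with ⟨y, _, hy⟩
      rw [← hy]; simp
  · have h1 := Finsupp.support_smul h
    rcases Finset.mem_image.mp (Finsupp.mapDomain_support h1) with ⟨y, _, hy⟩
    rw [← hy]; simp

lemma Phi_mapDomain_cons (lam : k) (N : ℕ) (c : S) (X : List S →₀ k) :
    Phi lam (N + 1) (Finsupp.mapDomain (c :: ·) X)
      = Phi lam N (Finsupp.mapDomain (c :: ·) X)
        + MonoidAlgebra.single (eN N c) lam * Phi lam N X := by
  simp only [Phi]
  rw [Finsupp.linearCombination_mapDomain, Finsupp.linearCombination_mapDomain,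
    Finsupp.linearCombination_apply, Finsupp.linearCombination_apply,
    Finsupp.linearCombination_apply]
  rw [Finsupp.sum, Finsupp.sum, Finsupp.sum, Finset.mul_sum, ← Finset.sum_add_distrib]
  apply Finset.sum_congr rfl
  intro t _
  simp only [Function.comp_apply]
  rw [psi_succ_cons, smul_add, mul_smul_comm]

/-- The key homomorphism property: `Phi` turns `msh` into the product. -/
lemma Phi_msh (lam : k) :
    ∀ (N : ℕ) (u v : List S), Phi lam N (msh lam u v) = psi lam N u * psi lam N v := by
  intro N
  induction N with
  | zero =>
      intro u v
      match u, v with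
      | [], v => rw [msh, Phi_single, psi_nil, one_smul, one_mul]
      | a :: as, [] => rw [msh, Phi_single, psi_nil, one_smul, mul_one]
      | a :: as, b :: bs =>
          rw [psi_zero_cons, zero_mul, Phi, Finsupp.linearCombination_apply, Finsupp.sum]
          apply Finset.sum_eq_zero
          intro x hx
          rcases List.exists_cons_of_ne_nil (msh_cons_cons_ne_nil lam a b as bs x hx)
            with ⟨y, t, hyt⟩
          rw [hyt, psi_zero_cons, smul_zero]
  | succ N ih =>
      intro u v
      match u, v with
      | [], v => rw [msh, Phi_single, psi_nil, one_smul, one_mul]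
      | a :: as, [] => rw [msh, Phi_single, psi_nil, one_smul, mul_one]
      | a :: as, b :: bs =>
          have hmsh : msh lam (a :: as) (b :: bs)
              = Finsupp.mapDomain (a :: ·) (msh lam as (b :: bs))
                + Finsupp.mapDomain (b :: ·) (msh lam (a :: as) bs)
                + lam • Finsupp.mapDomain ((a * b) :: ·) (msh lam as bs) := by rw [msh]
          rw [hmsh, map_add, map_add, map_smul, Phi_mapDomain_cons, Phi_mapDomain_cons,
            Phi_mapDomain_cons]
          have hgroup : Phi lam N (Finsupp.mapDomain (a :: ·) (msh lam as (b :: bs)))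
              + Phi lam N (Finsupp.mapDomain (b :: ·) (msh lam (a :: as) bs))
              + lam • Phi lam N (Finsupp.mapDomain ((a * b) :: ·) (msh lam as bs))
              = psi lam N (a :: as) * psi lam N (b :: bs) := by
            rw [← map_smul, ← map_add, ← map_add, ← hmsh, ih]
          have h1 := ih as (b :: bs)
          have h2 := ih (a :: as) bs
          have h3 := ih as bs
          have hss : MonoidAlgebra.single (eN N a) lam * MonoidAlgebra.single (eN N b) lam
              = lam • MonoidAlgebra.single (eN N (a * b)) lam := by
            rw [MonoidAlgebra.single_mul_single, eN_mul, MonoidAlgebra.smul_single']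
          rw [psi_succ_cons lam N a as, psi_succ_cons lam N b bs, h1, h2, h3]
          set Ta := Phi lam N (Finsupp.mapDomain (a :: ·) (msh lam as (b :: bs)))
          set Tb := Phi lam N (Finsupp.mapDomain (b :: ·) (msh lam (a :: as) bs))
          set Tc := Phi lam N (Finsupp.mapDomain ((a * b) :: ·) (msh lam as bs))
          set sa := MonoidAlgebra.single (eN N a) lam
          set sb := MonoidAlgebra.single (eN N b) lam
          set sc := MonoidAlgebra.single (eN N (a * b)) lam
          set Pa := psi lam N (a :: as)
          set Pb := psi lam N (b :: bs)
          set Qa := psi lam N as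
          set Qb := psi lam N bs
          rw [smul_add, ← smul_mul_assoc, ← hss]
          have hTc : lam • Tc = Pa * Pb - (Ta + Tb) := by rw [← hgroup]; abel
          rw [hTc]; ring

lemma Phi_mone (lam : k) (N : ℕ) : Phi lam N (mone : List S →₀ k) = 1 := by
  rw [mone, Phi_single, psi_nil, one_smul]

lemma Phi_mmul (lam : k) (N : ℕ) (x y : List S →₀ k) :
    Phi lam N (mmul lam x y) = Phi lam N x * Phi lam N y := by
  rw [mmul, map_finsuppSum]
  conv_rhs => rw [Phi, Finsupp.linearCombination_apply, Finsupp.linearCombination_apply,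
    Finsupp.sum_mul]
  apply Finsupp.sum_congr
  intro a ha
  rw [map_finsuppSum, Finsupp.mul_sum]
  apply Finsupp.sum_congr
  intro b hb
  rw [map_smul, Phi_msh, smul_mul_smul_comm]

lemma Phi_mpow (lam : k) (N : ℕ) (x : List S →₀ k) (n : ℕ) :
    Phi lam N (mpow lam x n) = (Phi lam N x) ^ n := by
  induction n with
  | zero => rw [mpow, Phi_mone, pow_zero]
  | succ n ih => rw [mpow, Phi_mmul, ih, pow_succ, mul_comm]

section Frob

variable (p : ℕ) [Fact p.Prime]

instance : CharP (MonoidAlgebra (ZMod p) (ℕ → WithOne S)) p :=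
  charP_of_injective_ringHom
    (f := (MonoidAlgebra.singleOneRingHom : ZMod p →+* MonoidAlgebra (ZMod p) (ℕ → WithOne S)))
    (fun x y h => by simpa [MonoidAlgebra.singleOneRingHom] using h) p

lemma withOne_coe_pow_spow (a : S) : ∀ n : ℕ, (↑a : WithOne S) ^ (n + 1) = ↑(spow a n)
  | 0 => pow_one _
  | n + 1 => by
      rw [pow_succ, withOne_coe_pow_spow a n, spow, ← WithOne.coe_mul, mul_comm]

lemma eN_pow (N : ℕ) (a : S) : (eN N a) ^ p = eN N (spow a (p - 1)) := by
  funext i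
  rw [Pi.pow_apply]
  rcases eq_or_ne i N with h | h
  · subst h
    rw [eN_apply_self, eN_apply_self, ← withOne_coe_pow_spow a (p - 1),
      Nat.sub_add_cancel (Fact.out : p.Prime).one_lt.le]
  · rw [eN_apply_ne N a h, eN_apply_ne N _ h, one_pow]

/-- Freshman's dream for `psi`. -/
lemma psi_pow (lam : ZMod p) :
    ∀ (N : ℕ) (u : List S),
      (psi lam N u) ^ p = psi lam N (u.map fun a => spow a (p - 1)) := by
  intro N
  induction N with
  | zero =>
      intro u
      cases u with
      | nil => rw [psi_nil, one_pow, List.map_nil, psi_nil]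
      | cons a t =>
          rw [psi_zero_cons, List.map_cons, psi_zero_cons,
            zero_pow (Fact.out : p.Prime).ne_zero]
  | succ N ih =>
      intro u
      cases u with
      | nil => rw [psi_nil, one_pow, List.map_nil, psi_nil]
      | cons a t =>
          rw [psi_succ_cons, add_pow_char, mul_pow, MonoidAlgebra.single_pow, eN_pow,
            ZMod.pow_card, ih (a :: t), ih t, List.map_cons, psi_succ_cons]

end Frob

/-! ### Support length bounds -/

lemma msh_support_length (lam : k) :
    ∀ (u v : List S), ∀ x ∈ (msh lam u v).support, x.length ≤ u.length + v.length
  | [], v => by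
      intro x hx
      rw [msh] at hx
      have := Finsupp.support_single_subset hx
      simp only [Finset.mem_singleton] at this
      subst this; simp
  | a :: as, [] => by
      intro x hx
      rw [msh] at hx
      have := Finsupp.support_single_subset hx
      simp only [Finset.mem_singleton] at this
      subst this; simp
  | a :: as, b :: bs => by
      classical
      intro x hx
      rw [msh] at hx
      rcases Finset.mem_union.mp (Finsupp.support_add hx) with h | h
      · rcases Finset.mem_union.mp (Finsupp.support_add h) with h1 | h1
        · rcases Finset.mem_image.mp (Finsupp.mapDomain_support h1) with ⟨y, hy, hxy⟩
          have := msh_support_length lam as (b :: bs) y hy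
          rw [← hxy]; simp only [List.length_cons]; simp at this ⊢; omega
        · rcases Finset.mem_image.mp (Finsupp.mapDomain_support h1) with ⟨y, hy, hxy⟩
          have := msh_support_length lam (a :: as) bs y hy
          rw [← hxy]; simp only [List.length_cons]; simp at this ⊢; omega
      · have h1 := Finsupp.support_smul h
        rcases Finset.mem_image.mp (Finsupp.mapDomain_support h1) with ⟨y, hy, hxy⟩
        have := msh_support_length lam as bs y hy
        rw [← hxy]; simp only [List.length_cons]; simp at this ⊢; omega
  termination_by u v => u.length + v.length
  decreasing_by all_goals simp only [List.length_cons]; omega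

lemma mmul_support_length (lam : k) {x y : List S →₀ k} {m n : ℕ}
    (hx : ∀ w ∈ x.support, w.length ≤ m) (hy : ∀ w ∈ y.support, w.length ≤ n) :
    ∀ w ∈ (mmul lam x y).support, w.length ≤ m + n := by
  classical
  intro w hw
  rw [mmul] at hw
  rcases Finset.mem_biUnion.mp (Finsupp.support_sum hw) with ⟨a, ha, hw1⟩
  rcases Finset.mem_biUnion.mp (Finsupp.support_sum hw1) with ⟨b, hb, hw2⟩
  have hw3 := Finsupp.support_smul hw2
  have := msh_support_length lam a b w hw3
  have h1 := hx a ha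
  have h2 := hy b hb
  omega

lemma mpow_support_length (lam : k) {x : List S →₀ k} {m : ℕ}
    (hx : ∀ w ∈ x.support, w.length ≤ m) :
    ∀ (n : ℕ), ∀ w ∈ (mpow lam x n).support, w.length ≤ n * m := by
  intro n
  induction n with
  | zero =>
      intro w hw
      rw [mpow, mone] at hw
      have := Finsupp.support_single_subset hw
      simp only [Finset.mem_singleton] at this
      subst this; simp
  | succ n ih =>
      intro w hw
      rw [mpow] at hw
      have := mmul_support_length lam hx ih w hw
      have hm : (n + 1) * m = m + n * m := by ring
      omega

end Aux

/-- Let `S` be an abelian semigroup in which `g^{p²} = g^p` for every `g`, and let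
`lam ≠ 0` in `F_p`.  Then for any pure tensor word `w` in the mixable shuffle algebra of
weight `lam` over `F_p` on `S`, we have `(w - w^{(p)})^{*p} = 0`, where `w^{(p)}` raises
each tensor factor to the `p`-th power.  (Here `spow a (p-1) = a^p`.) -/
theorem sub_pth_power_mpow_eq_zero {S : Type*} [CommSemigroup S]
    (p : ℕ) [Fact p.Prime]
    (hS : ∀ g : S, spow (spow g (p - 1)) (p - 1) = spow g (p - 1))
    (lam : ZMod p) (hlam : lam ≠ 0) (w : List S) :
    mpow lam
      (Finsupp.single w (1 : ZMod p)
        - Finsupp.single (w.map fun a => spow a (p - 1)) (1 : ZMod p)) p = 0 := by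
  classical
  set f : S → S := fun a => spow a (p - 1) with hf
  set x : List S →₀ ZMod p := Finsupp.single w 1 with hx
  set y : List S →₀ ZMod p := Finsupp.single (w.map f) 1 with hy
  set N := p * w.length with hN
  set z := mpow lam (x - y) p with hz
  have hff : (f ∘ f) = f := funext hS
  have hPhi : Phi lam N z = 0 := by
    rw [hz, Phi_mpow, map_sub, hx, hy, Phi_single, Phi_single, one_smul, one_smul,
      sub_pow_char, psi_pow, psi_pow, List.map_map, hff, sub_self]
  have hxy : ∀ u ∈ (x - y).support, u.length ≤ w.length := by
    intro u hu
    rcases Finset.mem_union.mp (Finsupp.support_sub hu) with h | h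
    · have := Finsupp.support_single_subset h
      simp only [Finset.mem_singleton] at this
      subst this; exact le_rfl
    · have := Finsupp.support_single_subset h
      simp only [Finset.mem_singleton] at this
      subst this; simp
  have hsupp : ∀ u ∈ z.support, u.length ≤ N :=
    mpow_support_length lam hxy p
  ext u
  rw [Finsupp.zero_apply]
  by_cases hu : u ∈ z.support
  · have hlen : u.length ≤ N := hsupp u hu
    have heval : (Phi lam N z).coeff (gmon u) = z u * lam ^ u.length := by
      rw [Phi, Finsupp.linearCombination_apply, MonoidAlgebra.coeff_finsuppSum, Finsupp.sum_apply, Finsupp.sum,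
        Finset.sum_eq_single u]
      · rw [MonoidAlgebra.coeff_smul_apply, psi_gmon lam N u u hlen hlen, if_pos rfl, smul_eq_mul]
      · intro v hv hne
        rw [MonoidAlgebra.coeff_smul_apply, psi_gmon lam N v u (hsupp v hv) hlen, if_neg hne, smul_zero]
      · intro h; exact (h hu).elim
    rw [hPhi, MonoidAlgebra.coeff_zero, Finsupp.coe_zero, Pi.zero_apply] at heval
    rcases mul_eq_zero.mp heval.symm with h | h
    · exact h
    · exact absurd h (pow_ne_zero _ hlam)
  · exact Finsupp.notMem_support_iff.mp hu
end

section
/- A finitely generated abelian group M is free of rank k if M ⊗ ℤ_p is a free ℤ_p-module of rank k for all primes p. -/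
set_option maxHeartbeats 1000000
set_option synthInstance.maxHeartbeats 200000

open TensorProduct

/-- A torsion-free abelian group is a flat `ℤ`-module. -/
private lemma flat_of_torsionFree_aux (N : Type*) [AddCommGroup N] [Module ℤ N]
    [NoZeroSMulDivisors ℤ N] : Module.Flat ℤ N := by
  rw [Module.Flat.iff_rTensor_injective']
  intro I
  obtain ⟨n, rfl⟩ := (IsPrincipalIdealRing.principal I).principal
  rcases eq_or_ne n 0 with rfl | hn
  · haveI : Subsingleton (Submodule.span ℤ ({(0 : ℤ)} : Set ℤ)) := by
      have hb : Submodule.span ℤ ({(0 : ℤ)} : Set ℤ) = ⊥ := by simp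
      rw [hb]
      infer_instance
    intro a b _
    exact Subsingleton.elim a b
  · set I : Ideal ℤ := Ideal.span {n} with hI
    have hmem : n ∈ I := Ideal.subset_span rfl
    let g : ℤ →ₗ[ℤ] I := LinearMap.toSpanSingleton ℤ I ⟨n, hmem⟩
    have hg : Function.Bijective g := by
      constructor
      · intro a b hab
        have : a • (⟨n, hmem⟩ : I) = b • (⟨n, hmem⟩ : I) := hab
        have h2 : a * n = b * n := congrArg Subtype.val this
        exact mul_right_cancel₀ hn h2
      · rintro ⟨m, hm⟩
        rw [hI, Ideal.mem_span_singleton] at hm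
        obtain ⟨a, rfl⟩ := hm
        exact ⟨a, by simp [g, LinearMap.toSpanSingleton_apply, Subtype.ext_iff, mul_comm]⟩
    let e : ℤ ≃ₗ[ℤ] I := LinearEquiv.ofBijective g hg
    have hcomp : I.subtype ∘ₗ (e : ℤ →ₗ[ℤ] I) = n • LinearMap.id := by
      ext a
      simp [e, g, LinearMap.toSpanSingleton_apply, mul_comm]
    have key : Function.Injective (LinearMap.rTensor N (n • (LinearMap.id : ℤ →ₗ[ℤ] ℤ))) := by
      have hid : LinearMap.rTensor N (n • (LinearMap.id : ℤ →ₗ[ℤ] ℤ)) =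
          n • LinearMap.id := by
        apply TensorProduct.ext'
        intro a m
        simp [LinearMap.rTensor_tmul, TensorProduct.smul_tmul']
      rw [hid]
      intro a b hab
      simp only [LinearMap.smul_apply, LinearMap.id_apply] at hab
      have h1 : n • (a - b) = 0 := by rw [smul_sub, hab, sub_self]
      have h2 := congrArg (TensorProduct.lid ℤ N).toLinearMap h1
      rw [LinearMap.map_smul, map_zero] at h2
      have h3 : n • ((TensorProduct.lid ℤ N).toLinearMap (a - b)) = 0 := by
        rw [← int_smul_eq_zsmul ‹Module ℤ N›]; exact h2
      rcases ‹NoZeroSMulDivisors ℤ N›.eq_zero_or_eq_zero_of_smul_eq_zero h3 with h0 | h0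
      · exact absurd h0 hn
      · exact sub_eq_zero.mp ((TensorProduct.lid ℤ N).map_eq_zero_iff.mp (by simpa using h0))
    have hsurj : Function.Surjective (LinearMap.rTensor N (e : ℤ →ₗ[ℤ] I)) :=
      LinearMap.rTensor_surjective N (g := (e : ℤ →ₗ[ℤ] I)) e.surjective
    have hfac : LinearMap.rTensor N I.subtype ∘ₗ LinearMap.rTensor N (e : ℤ →ₗ[ℤ] I)
        = LinearMap.rTensor N (n • (LinearMap.id : ℤ →ₗ[ℤ] ℤ)) := by
      rw [← LinearMap.rTensor_comp, hcomp]
    intro a b hab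
    obtain ⟨a', rfl⟩ := hsurj a
    obtain ⟨b', rfl⟩ := hsurj b
    have h4 : (LinearMap.rTensor N I.subtype ∘ₗ LinearMap.rTensor N (e : ℤ →ₗ[ℤ] I)) a'
        = (LinearMap.rTensor N I.subtype ∘ₗ LinearMap.rTensor N (e : ℤ →ₗ[ℤ] I)) b' := hab
    rw [hfac] at h4
    exact congrArg _ (key h4)

/-- If `ℤ_p ⊗ M` is free over `ℤ_p`, then `M` has no `p`-torsion. -/
private lemma padic_torsion_aux {M : Type*} [AddCommGroup M] (k p : ℕ) [hp : Fact p.Prime]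
    (e : (TensorProduct ℤ (PadicInt p) M) ≃ₗ[PadicInt p] (Fin k → PadicInt p))
    (x : M) (hx : ((p : ℕ) : ℤ) • x = 0) : x = 0 := by
  by_contra hx0
  have hpz : Prime ((p : ℕ) : ℤ) := Nat.prime_iff_prime_int.1 hp.out
  set f : ℤ →ₗ[ℤ] M := LinearMap.toSpanSingleton ℤ M x with hf
  have hfp : f ((p : ℕ) : ℤ) = 0 := by
    rw [hf, LinearMap.toSpanSingleton_apply]
    exact hx
  have hker1 : Ideal.span {((p : ℕ) : ℤ)} ≤ LinearMap.ker f := by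
    rw [Ideal.span_le, Set.singleton_subset_iff]
    exact LinearMap.mem_ker.mpr hfp
  have hker2 : LinearMap.ker f ≤ Ideal.span {((p : ℕ) : ℤ)} := by
    intro n hn
    rw [LinearMap.mem_ker] at hn
    rw [Ideal.mem_span_singleton]
    by_contra hdvd
    obtain ⟨a, b, hab⟩ := hpz.coprime_iff_not_dvd.mpr hdvd
    apply hx0
    have hzero : f (a * ((p : ℕ) : ℤ) + b * n) = 0 := by
      rw [map_add, ← smul_eq_mul, ← smul_eq_mul, map_smul, map_smul, hfp, hn,
        smul_zero, smul_zero, add_zero]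
    have hx1 : x = f 1 := by
      rw [hf, LinearMap.toSpanSingleton_apply, one_smul]
    rw [hx1, ← hab]
    exact hzero
  -- the induced injective map from ℤ/p
  let g : (ℤ ⧸ Ideal.span {((p : ℕ) : ℤ)}) →ₗ[ℤ] M := Submodule.liftQ _ f hker1
  have hg : Function.Injective g :=
    LinearMap.ker_eq_bot.mp (Submodule.ker_liftQ_eq_bot _ f hker1 hker2)
  haveI : NoZeroSMulDivisors ℤ (PadicInt p) :=
    inferInstance
  haveI : Module.Flat ℤ (PadicInt p) := flat_of_torsionFree_aux (PadicInt p)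
  have hφ : Function.Injective (LinearMap.lTensor (PadicInt p) g) :=
    Module.Flat.lTensor_preserves_injective_linearMap g hg
  -- the element 1 ⊗ 1 in ℤ_p ⊗ ℤ/p is nonzero
  set t := (1 : PadicInt p) ⊗ₜ[ℤ]
    (Ideal.Quotient.mk (Ideal.span {((p : ℕ) : ℤ)}) (1 : ℤ)) with ht_def
  let u := (PadicInt.toZMod (p := p)).toIntLinearMap
  let v := ((Int.quotientSpanNatEquivZMod p).toRingHom).toIntLinearMap
  let ψ := TensorProduct.lift ((LinearMap.mul ℤ (ZMod p)).compl₁₂ u v)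
  have hψt : ψ t = 1 := by
    rw [ht_def]
    simp only [ψ, TensorProduct.lift.tmul, LinearMap.compl₁₂_apply, LinearMap.mul_apply']
    rw [show u 1 = 1 from map_one PadicInt.toZMod,
      show v (Ideal.Quotient.mk _ (1 : ℤ)) = 1 from
        map_one (Int.quotientSpanNatEquivZMod p).toRingHom, one_mul]
  have ht : t ≠ 0 := by
    intro h0
    have : (1 : ZMod p) = 0 := by rw [← hψt, h0, ψ.map_zero]
    exact one_ne_zero this
  -- its image in ℤ_p ⊗ M
  have hy : LinearMap.lTensor (PadicInt p) g t = (1 : PadicInt p) ⊗ₜ[ℤ] x := by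
    rw [ht_def, LinearMap.lTensor_tmul]
    congr 1
    show f 1 = x
    rw [hf, LinearMap.toSpanSingleton_apply, one_smul]
  have hpt : ((((p : ℕ) : ℤ)) : PadicInt p) • ((1 : PadicInt p) ⊗ₜ[ℤ] x :
      (PadicInt p) ⊗[ℤ] M) = 0 := by
    rw [Int.cast_smul_eq_zsmul]
    have h1 : (((p : ℕ) : ℤ)) • ((1 : PadicInt p) ⊗ₜ[ℤ] x : (PadicInt p) ⊗[ℤ] M)
        = (1 : PadicInt p) ⊗ₜ[ℤ] ((((p : ℕ) : ℤ)) • x) :=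
      (TensorProduct.tmul_smul _ _ _).symm
    rw [h1, hx, TensorProduct.tmul_zero]
  have hez : ((((p : ℕ) : ℤ)) : PadicInt p) • e (LinearMap.lTensor (PadicInt p) g t) = 0 := by
    rw [← map_smul, hy, hpt, map_zero]
  have hc : ((((p : ℕ) : ℤ)) : PadicInt p) ≠ 0 := by
    rw [Int.cast_ne_zero]
    exact_mod_cast hp.out.ne_zero
  have hze : e (LinearMap.lTensor (PadicInt p) g t) = 0 := by
    funext i
    have hi := congrFun hez i
    rw [Pi.smul_apply, smul_eq_mul] at hi
    rcases mul_eq_zero.mp hi with h0 | h0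
    · exact absurd h0 hc
    · exact h0
  have htz : t = 0 := by
    apply hφ
    rw [map_zero]
    exact e.map_eq_zero_iff.mp hze
  exact ht htz

/-- A finitely generated abelian group `M` is free of rank `k` if `M ⊗ ℤ_p` is a free
`ℤ_p`-module of rank `k` for all primes `p`. -/
theorem free_of_padic_free {M : Type*} [AddCommGroup M] [Module.Finite ℤ M] (k : ℕ)
    (h : ∀ (p : ℕ) [Fact p.Prime],
      Nonempty ((TensorProduct ℤ (PadicInt p) M) ≃ₗ[PadicInt p] (Fin k → PadicInt p))) :
    Nonempty (M ≃ₗ[ℤ] (Fin k → ℤ)) := by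
  -- `M` is torsion-free
  have htor : ∀ x : M, IsOfFinAddOrder x → x = 0 := by
    intro x hfin
    by_contra hx0
    set o := addOrderOf x with ho
    have ho0 : o ≠ 0 := (addOrderOf_pos_iff.mpr hfin).ne'
    have ho1 : o ≠ 1 := fun h1 => hx0 (AddMonoid.addOrderOf_eq_one_iff.mp h1)
    set p := o.minFac with hpdef
    have hp : p.Prime := Nat.minFac_prime ho1
    haveI : Fact p.Prime := ⟨hp⟩
    obtain ⟨e⟩ := h p
    have hdvd : p ∣ o := Nat.minFac_dvd o
    set y := (o / p) • x with hy
    have hpy : ((p : ℕ) : ℤ) • y = 0 := by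
      have h1 : p • y = 0 := by
        rw [hy, smul_smul, Nat.mul_div_cancel' hdvd]
        exact addOrderOf_nsmul_eq_zero x
      rw [natCast_zsmul]
      exact h1
    have hyne : y ≠ 0 := by
      intro h0
      have hdvd2 : o ∣ o / p := addOrderOf_dvd_of_nsmul_eq_zero (hy ▸ h0)
      have hpos : 0 < o / p := Nat.div_pos (Nat.minFac_le (Nat.pos_of_ne_zero ho0)) hp.pos
      have hle := Nat.le_of_dvd hpos hdvd2
      have hlt : o / p < o := Nat.div_lt_self (Nat.pos_of_ne_zero ho0) hp.one_lt
      omega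
    exact hyne (padic_torsion_aux k p e y hpy)
  haveI : NoZeroSMulDivisors ℤ M := by
    constructor
    intro c x hcx
    rcases eq_or_ne c 0 with rfl | hc
    · exact Or.inl rfl
    · exact Or.inr (htor x (isOfFinAddOrder_iff_zsmul_eq_zero.mpr ⟨c, hc, hcx⟩))
  haveI : Module.Free ℤ M := Module.free_of_finite_type_torsion_free'
  haveI : Fact (Nat.Prime 2) := ⟨Nat.prime_two⟩
  obtain ⟨e2⟩ := h 2
  have h1 : Module.finrank (PadicInt 2) ((PadicInt 2) ⊗[ℤ] M) = Module.finrank ℤ M :=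
    Module.finrank_baseChange
  have h2 := e2.finrank_eq
  rw [h1, Module.finrank_fin_fun] at h2
  have hcard : Fintype.card (Module.Free.ChooseBasisIndex ℤ M) = k := by
    rw [← Module.finrank_eq_card_chooseBasisIndex, h2]
  exact ⟨(Module.Free.chooseBasis ℤ M).equivFun.trans
    (LinearEquiv.funCongrLeft ℤ ℤ (Fintype.equivFinOfCardEq hcard).symm)⟩
end

section
/- Let f: M_1 → M_2 be a homomorphism of finitely generated free abelian groups. If for every prime p the induced map M_1 ⊗ ℤ_p → M_2 ⊗ ℤ_p is injective and its image is a direct summand of M_2 ⊗ ℤ_p, then f is injective and f(M_1) is a direct summand of M_2. -/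
set_option maxHeartbeats 1600000

open TensorProduct

private lemma tmul_one_injective_aux {p : ℕ} [Fact p.Prime] {ι M : Type*} [AddCommGroup M]
    [Module ℤ M] (b : Module.Basis ι ℤ M) {x y : M}
    (hxy : (1 : ℤ_[p]) ⊗ₜ[ℤ] x = (1 : ℤ_[p]) ⊗ₜ[ℤ] y) : x = y := by
  apply b.repr.injective
  ext i
  have h2 := congrArg (fun z => (b.baseChange ℤ_[p]).repr z i) hxy
  simp only [Module.Basis.baseChange_repr_tmul, zsmul_eq_mul, mul_one] at h2
  exact_mod_cast h2

/-- Let `f : M₁ → M₂` be a homomorphism of finitely generated free abelian groups.  If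
for every prime `p` the map `f ⊗ ℤ_p` is injective with image a direct summand of
`M₂ ⊗ ℤ_p`, then `f` is injective and `f(M₁)` is a direct summand of `M₂`. -/
theorem injective_direct_summand_of_padic {M₁ M₂ : Type*}
    [AddCommGroup M₁] [AddCommGroup M₂]
    [Module.Free ℤ M₁] [Module.Finite ℤ M₁] [Module.Free ℤ M₂] [Module.Finite ℤ M₂]
    (f : M₁ →ₗ[ℤ] M₂)
    (h : ∀ (p : ℕ) [Fact p.Prime],
      Function.Injective (LinearMap.baseChange (PadicInt p) f)
      ∧ ∃ N' : Submodule (PadicInt p) (TensorProduct ℤ (PadicInt p) M₂),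
          IsCompl (LinearMap.range (LinearMap.baseChange (PadicInt p) f)) N') :
    Function.Injective f ∧ ∃ N' : Submodule ℤ M₂, IsCompl (LinearMap.range f) N' := by
  classical
  let b₁ := Module.Free.chooseBasis ℤ M₁
  let b₂ := Module.Free.chooseBasis ℤ M₂
  -- Injectivity of `f`, using the prime 2.
  haveI : Fact (Nat.Prime 2) := ⟨Nat.prime_two⟩
  have finj : Function.Injective f := by
    intro x y hxy
    have h2 : LinearMap.baseChange ℤ_[2] f ((1 : ℤ_[2]) ⊗ₜ[ℤ] x)
        = LinearMap.baseChange ℤ_[2] f ((1 : ℤ_[2]) ⊗ₜ[ℤ] y) := by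
      simp only [LinearMap.baseChange_tmul, hxy]
    exact tmul_one_injective_aux b₁ ((h 2).1 h2)
  refine ⟨finj, ?_⟩
  -- Key step: for each prime p, if p • x ∈ range f then x ∈ range f.
  have key : ∀ (p : ℕ) [Fact p.Prime] (x : M₂),
      (p : ℤ) • x ∈ LinearMap.range f → x ∈ LinearMap.range f := by
    intro p hp x hx
    obtain ⟨m, hm⟩ := hx
    obtain ⟨hinj, N', hN'⟩ := h p
    set N := LinearMap.range (LinearMap.baseChange ℤ_[p] f) with hN
    have hsmul : (p : ℤ_[p]) • ((1 : ℤ_[p]) ⊗ₜ[ℤ] x)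
        = LinearMap.baseChange ℤ_[p] f ((1 : ℤ_[p]) ⊗ₜ[ℤ] m) := by
      rw [LinearMap.baseChange_tmul, hm, TensorProduct.tmul_smul,
        ← Int.cast_smul_eq_zsmul ℤ_[p]]
      norm_cast
    have hmem : (1 : ℤ_[p]) ⊗ₜ[ℤ] x ∈ N ⊔ N' := by
      rw [hN'.sup_eq_top]; trivial
    obtain ⟨a, ha, a', ha', hsum⟩ := Submodule.mem_sup.mp hmem
    have hpa' : (p : ℤ_[p]) • a' = 0 := by
      have h1 : (p : ℤ_[p]) • ((1 : ℤ_[p]) ⊗ₜ[ℤ] x) ∈ N := by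
        rw [hsmul]; exact LinearMap.mem_range_self _ _
      have h2 : (p : ℤ_[p]) • a' ∈ N := by
        have heq : (p : ℤ_[p]) • a'
            = (p : ℤ_[p]) • ((1 : ℤ_[p]) ⊗ₜ[ℤ] x) - (p : ℤ_[p]) • a := by
          rw [← hsum, smul_add]; abel
        rw [heq]; exact N.sub_mem h1 (N.smul_mem _ ha)
      have h3 : (p : ℤ_[p]) • a' ∈ N ⊓ N' := ⟨h2, N'.smul_mem _ ha'⟩
      rw [hN'.inf_eq_bot, Submodule.mem_bot] at h3
      exact h3
    have hpne : (p : ℤ_[p]) ≠ 0 := Nat.cast_ne_zero.mpr hp.out.ne_zero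
    have ha'0 : a' = 0 := by
      rcases smul_eq_zero.mp hpa' with h | h
      · exact absurd h hpne
      · exact h
    rw [ha'0, add_zero] at hsum
    obtain ⟨u, hu⟩ : (1 : ℤ_[p]) ⊗ₜ[ℤ] x ∈ N := hsum ▸ ha
    -- now p • u = 1 ⊗ m by injectivity
    have hpu : (p : ℤ_[p]) • u = (1 : ℤ_[p]) ⊗ₜ[ℤ] m := by
      apply hinj
      rw [map_smul, hu, hsmul]
    -- so each coordinate of m is divisible by p
    have hdvd : ∀ i, (p : ℤ) ∣ b₁.repr m i := by
      intro i
      have h4 := congrArg (fun z => (b₁.baseChange ℤ_[p]).repr z i) hpu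
      simp only [map_smul, Finsupp.smul_apply, Module.Basis.baseChange_repr_tmul,
        zsmul_eq_mul, mul_one, smul_eq_mul] at h4
      rw [← PadicInt.norm_int_lt_one_iff_dvd, PadicInt.norm_lt_one_iff_dvd]
      exact ⟨(b₁.baseChange ℤ_[p]).repr u i, h4.symm⟩
    -- construct m' with p • m' = m
    set c : Module.Free.ChooseBasisIndex ℤ M₁ →₀ ℤ :=
      (b₁.repr m).mapRange (fun t => t / (p : ℤ)) (by simp) with hc
    set m' : M₁ := b₁.repr.symm c with hm'
    have hpm' : (p : ℤ) • m' = m := by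
      apply b₁.repr.injective
      rw [map_smul, hm', LinearEquiv.apply_symm_apply]
      ext i
      rw [Finsupp.smul_apply, hc, Finsupp.mapRange_apply, smul_eq_mul,
        Int.mul_ediv_cancel' (hdvd i)]
    refine ⟨m', ?_⟩
    have hz : (p : ℤ) • (x - f m') = 0 := by
      rw [smul_sub, ← map_smul, hpm', hm, sub_self]
    have hpz : ((p : ℕ) : ℤ) ≠ 0 := by exact_mod_cast hp.out.ne_zero
    rcases smul_eq_zero.mp hz with h | h
    · exact absurd h hpz
    · rw [sub_eq_zero] at h; exact h.symm
  -- extend to all nonzero naturals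
  have keyn : ∀ (n : ℕ), n ≠ 0 → ∀ x : M₂,
      (n : ℤ) • x ∈ LinearMap.range f → x ∈ LinearMap.range f := by
    intro n
    induction n using Nat.strong_induction_on with
    | _ n ih =>
      intro hn x hx
      rcases eq_or_ne n 1 with rfl | h1
      · simpa using hx
      · obtain ⟨p, hp, k, rfl⟩ : ∃ p, p.Prime ∧ ∃ k, n = p * k := by
          obtain ⟨p, hp, hpd⟩ := Nat.exists_prime_and_dvd h1
          exact ⟨p, hp, hpd⟩
        haveI : Fact p.Prime := ⟨hp⟩
        have hk : k ≠ 0 := by rintro rfl; simp at hn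
        have hk' : k < p * k :=
          lt_mul_of_one_lt_left (Nat.pos_of_ne_zero hk) hp.one_lt
        refine ih k hk' hk x (key p ((k : ℤ) • x) ?_)
        have heq : ((p * k : ℕ) : ℤ) • x = (p : ℤ) • ((k : ℤ) • x) := by
          push_cast; rw [mul_smul]
        rwa [heq] at hx
  -- the quotient is torsion-free, hence free, hence the projection splits
  set N := LinearMap.range f with hNdef
  haveI hQtf : NoZeroSMulDivisors ℤ (M₂ ⧸ N) := by
    constructor
    intro c q hcq
    rcases eq_or_ne c 0 with rfl | hc
    · exact Or.inl rfl
    right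
    obtain ⟨x, rfl⟩ := N.mkQ_surjective q
    have hx : c • x ∈ N := by
      rw [← Submodule.Quotient.mk_eq_zero, ← Submodule.mkQ_apply, map_smul]
      exact hcq
    have hx' : (c.natAbs : ℤ) • x ∈ N := by
      rcases Int.natAbs_eq c with he | he
      · rwa [← he]
      · rw [← neg_neg ((c.natAbs : ℤ) • x), ← neg_smul, ← he]
        exact N.neg_mem hx
    have : x ∈ N := keyn c.natAbs (Int.natAbs_ne_zero.mpr hc) x hx'
    rwa [← Submodule.Quotient.mk_eq_zero] at this
  haveI : Module.Free ℤ (M₂ ⧸ N) := Module.free_of_finite_type_torsion_free'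
  obtain ⟨s, hs⟩ := N.mkQ.exists_rightInverse_of_surjective
    (by rw [Submodule.range_mkQ])
  refine ⟨LinearMap.range s, ?_, ?_⟩
  · -- disjoint
    rw [Submodule.disjoint_def]
    intro x hxN hxs
    obtain ⟨q, rfl⟩ := hxs
    have h0 : N.mkQ (s q) = 0 := by
      rw [Submodule.mkQ_apply, Submodule.Quotient.mk_eq_zero]; exact hxN
    have hq : q = 0 := by
      have := congrArg (fun g => g q) hs
      simpa [h0] using this.symm
    rw [hq, map_zero]
  · -- codisjoint
    rw [codisjoint_iff, eq_top_iff]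
    intro x _
    have hd : x = (x - s (N.mkQ x)) + s (N.mkQ x) := by abel
    rw [hd]
    refine Submodule.add_mem_sup ?_ (LinearMap.mem_range_self s _)
    rw [← Submodule.Quotient.mk_eq_zero, ← Submodule.mkQ_apply]
    have := congrArg (fun g => g (N.mkQ x)) hs
    simp only [LinearMap.comp_apply, LinearMap.id_apply] at this
    rw [map_sub, this, sub_self]
end

section
/- Let X be a set and M(X) the free commutative monoid on X, and F(X) the free abelian semigroup on X (monomials of positive degree). In the mixable shuffle algebra Sh_{ℤ,λ}(M(X)), the ℤ-span of words all of whose letters lie in F(X) is a subalgebra (closed under the mixable shuffle product), isomorphic to Sh_{ℤ,λ}(F(X)), and the ℤ-span of words having at least one letter equal to 1 is a complementary submodule, so that Sh_{ℤ,λ}(M(X)) = Sh_{ℤ,λ}(F(X)) ⊕ N^+ as ℤ-modules. -/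
variable {S : Type*} {k : Type*}

/-- The free commutative monoid `M(X)` on `X`, realized multiplicatively as multisets. -/
abbrev FreeCommMonoidOn (X : Type*) := Multiplicative (Multiset X)

/-- The free abelian semigroup `F(X)` on `X`: the non-identity elements of `M(X)`. -/
def FreeAbSemigroupOn (X : Type*) := {m : FreeCommMonoidOn X // m ≠ 1}

instance {X : Type*} : Mul (FreeAbSemigroupOn X) :=
  ⟨fun a b => ⟨a.1 * b.1, fun h => by
    have h' : Multiplicative.toAdd a.1 + Multiplicative.toAdd b.1 = (0 : Multiset X) := h
    have hc := congrArg Multiset.card h'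
    rw [Multiset.card_add] at hc
    simp only [Multiset.card_zero] at hc
    have ha : Multiplicative.toAdd a.1 = 0 := Multiset.card_eq_zero.mp (by omega)
    exact a.2 ha⟩⟩

/-- The natural inclusion `Sh(F(X)) → Sh(M(X))` of mixable shuffle algebras, induced
by the inclusion of words over `F(X)` into words over `M(X)`. -/
noncomputable def shInclusion (X : Type*) :
    (List (FreeAbSemigroupOn X) →₀ ℤ) → (List (FreeCommMonoidOn X) →₀ ℤ) :=
  Finsupp.mapDomain (List.map fun a : FreeAbSemigroupOn X => a.1)

/-- The span of words over `M(X)` all of whose letters lie in `F(X)`. -/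
noncomputable def shSub (X : Type*) : Submodule ℤ (List (FreeCommMonoidOn X) →₀ ℤ) :=
  Submodule.span ℤ
    {x | ∃ w : List (FreeCommMonoidOn X), (∀ l ∈ w, l ≠ 1) ∧ x = Finsupp.single w (1 : ℤ)}

/-- The span `N⁺` of words over `M(X)` having at least one letter equal to `1`. -/
noncomputable def shN (X : Type*) : Submodule ℤ (List (FreeCommMonoidOn X) →₀ ℤ) :=
  Submodule.span ℤ
    {x | ∃ w : List (FreeCommMonoidOn X), (∃ l ∈ w, l = 1) ∧ x = Finsupp.single w (1 : ℤ)}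


section Aux
variable {S T : Type*} [Mul S] [Mul T] [CommRing k]

lemma msh_map (f : S → T) (hf : ∀ a b : S, f (a * b) = f a * f b) (lam : k) :
    ∀ a b : List S,
      Finsupp.mapDomain (List.map f) (msh lam a b) = msh lam (a.map f) (b.map f) := by
  intro a
  induction a with
  | nil =>
    intro b
    simp [msh, Finsupp.mapDomain_single]
  | cons a as ih =>
    intro b
    induction b with
    | nil => simp [msh, Finsupp.mapDomain_single]
    | cons b bs ihb =>
      have key : ∀ (c : S) (x : List S →₀ k),
          Finsupp.mapDomain (List.map f) (Finsupp.mapDomain (c :: ·) x)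
            = Finsupp.mapDomain (f c :: ·) (Finsupp.mapDomain (List.map f) x) := by
        intro c x
        have hcomp : (List.map f ∘ (c :: ·) : List S → List T)
            = (f c :: ·) ∘ List.map f := by funext l; simp
        rw [← Finsupp.mapDomain_comp, hcomp, Finsupp.mapDomain_comp]
      simp only [List.map_cons] at ihb
      simp only [msh, List.map_cons, Finsupp.mapDomain_add, Finsupp.mapDomain_smul]
      rw [key, key, key, hf, ih, ihb, ih, List.map_cons]

lemma mmul_map (f : S → T) (hf : ∀ a b : S, f (a * b) = f a * f b) (lam : k)
    (u v : List S →₀ k) :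
    Finsupp.mapDomain (List.map f) (mmul lam u v)
      = mmul lam (Finsupp.mapDomain (List.map f) u) (Finsupp.mapDomain (List.map f) v) := by
  unfold mmul
  rw [Finsupp.sum_mapDomain_index (by intro b; simp)
    (by intro b m1 m2; simp [add_mul, add_smul, Finsupp.sum_add])]
  rw [← Finsupp.mapDomain.addMonoidHom_apply, map_finsuppSum]
  refine Finsupp.sum_congr fun a _ => ?_
  rw [map_finsuppSum]
  rw [Finsupp.sum_mapDomain_index (by intro b; simp)
    (by intro b m1 m2; simp [mul_add, add_smul])]
  refine Finsupp.sum_congr fun b _ => ?_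
  rw [Finsupp.mapDomain.addMonoidHom_apply, Finsupp.mapDomain_smul, msh_map f hf]

end Aux

/-- In `Sh_{ℤ,λ}(M(X))`, the span of words with letters in `F(X)` is a subalgebra under
the mixable shuffle product, isomorphic to `Sh_{ℤ,λ}(F(X))` via the natural inclusion,
and the span `N⁺` of words containing the letter `1` is a complementary submodule:
`Sh_{ℤ,λ}(M(X)) = Sh_{ℤ,λ}(F(X)) ⊕ N⁺` as `ℤ`-modules. -/
theorem sh_monoid_decomposition {X : Type*} (lam : ℤ) :
    (∀ x ∈ shSub X, ∀ y ∈ shSub X, mmul lam x y ∈ shSub X)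
    ∧ shSub X ⊔ shN X = ⊤
    ∧ Disjoint (shSub X) (shN X)
    ∧ Function.Injective (shInclusion X)
    ∧ Set.range (shInclusion X) = (shSub X : Set _)
    ∧ (∀ u v : List (FreeAbSemigroupOn X) →₀ ℤ,
        shInclusion X (mmul lam u v) = mmul lam (shInclusion X u) (shInclusion X v)) := by
  set A : Set (List (FreeCommMonoidOn X)) := {w | ∀ l ∈ w, l ≠ 1} with hA
  have hval : Function.Injective (fun a : FreeAbSemigroupOn X => a.1) :=
    fun a b h => Subtype.ext h
  have hinj : Function.Injective (List.map fun a : FreeAbSemigroupOn X => a.1) :=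
    List.map_injective_iff.mpr hval
  have hmulval : ∀ a b : FreeAbSemigroupOn X, (a * b).1 = a.1 * b.1 := fun _ _ => rfl
  have hmult : ∀ u v : List (FreeAbSemigroupOn X) →₀ ℤ,
      shInclusion X (mmul lam u v) = mmul lam (shInclusion X u) (shInclusion X v) :=
    fun u v => mmul_map _ hmulval lam u v
  have hrangeset : A ⊆ Set.range (List.map fun a : FreeAbSemigroupOn X => a.1) := by
    intro w hw
    refine ⟨w.pmap (fun l hl => ⟨l, hl⟩) (fun l hl => hw l hl), ?_⟩
    exact (List.map_pmap _).trans (List.pmap_eq_self.mpr (fun _ _ => rfl))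
  have himset : ∀ w' : List (FreeAbSemigroupOn X),
      (List.map (fun a : FreeAbSemigroupOn X => a.1) w') ∈ A := by
    intro w' l hl
    obtain ⟨a, -, rfl⟩ := List.mem_map.mp hl
    exact a.2
  have hsub : shSub X = Finsupp.supported ℤ ℤ A := by
    rw [shSub, Finsupp.supported_eq_span_single]
    congr 1
    ext x
    constructor
    · rintro ⟨w, hw, rfl⟩; exact ⟨w, hw, rfl⟩
    · rintro ⟨w, hw, rfl⟩; exact ⟨w, hw, rfl⟩
  have hN : shN X = Finsupp.supported ℤ ℤ Aᶜ := by
    rw [shN, Finsupp.supported_eq_span_single]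
    congr 1
    ext x
    constructor
    · rintro ⟨w, hw, rfl⟩
      refine ⟨w, ?_, rfl⟩
      simp only [hA, Set.mem_compl_iff, Set.mem_setOf_eq, not_forall]
      obtain ⟨l, hl, hl1⟩ := hw
      exact ⟨l, hl, fun h => h hl1⟩
    · rintro ⟨w, hw, rfl⟩
      refine ⟨w, ?_, rfl⟩
      simp only [hA, Set.mem_compl_iff, Set.mem_setOf_eq, not_forall] at hw
      obtain ⟨l, hl, hl1⟩ := hw
      exact ⟨l, hl, not_not.mp hl1⟩
  have hrange : Set.range (shInclusion X) = (shSub X : Set _) := by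
    classical
    rw [hsub]
    ext x
    simp only [SetLike.mem_coe, Finsupp.mem_supported]
    constructor
    · rintro ⟨u, rfl⟩
      intro w hw
      have := Finsupp.mapDomain_support (f := List.map fun a : FreeAbSemigroupOn X => a.1)
        (s := u) hw
      obtain ⟨w', -, rfl⟩ := Finset.mem_image.mp this
      exact himset w'
    · intro hx
      refine ⟨Finsupp.comapDomain _ x (hinj.injOn), ?_⟩
      exact Finsupp.mapDomain_comapDomain _ hinj x (fun w hw => hrangeset (hx hw))
  refine ⟨?_, ?_, ?_, Finsupp.mapDomain_injective hinj, hrange, hmult⟩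
  · intro x hx y hy
    rw [← SetLike.mem_coe, ← hrange] at hx hy ⊢
    obtain ⟨u, rfl⟩ := hx
    obtain ⟨v, rfl⟩ := hy
    exact ⟨mmul lam u v, hmult u v⟩
  · rw [hsub, hN, ← Finsupp.supported_union, Set.union_compl_self, Finsupp.supported_univ]
  · rw [hsub, hN]
    exact Finsupp.disjoint_supported_supported disjoint_compl_right
end
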